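/- arXiv:0711.1953 — 2 statements merged into one kernel-verified Lean document; each statement's English description precedes it below -/
import Mathlib

section
/- Let μ be a finite Borel measure on ℝ with compact support. Then the global modulus of continuity s(μ,·) is right-continuous: for every ε ≥ 0 one has s(μ, ε) = lim_{δ → 0+} s(μ, ε + δ). -/
/-!
The function `(r, l) ↦ μ [l - r, l + r]` is upper semicontinuous, since a closed interval is the
decreasing intersection of its closed `η`-neighbourhoods and `μ` is finite on them. As `μ` has
compact support, for radii near `ε` only centres in a fixed compact interval matter, and by the tube
lemma a supremum of an upper semicontinuous function over a compact set is upper semicontinuous in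
the remaining variable. Finally, a monotone upper semicontinuous function is right-continuous.
-/

open MeasureTheory Filter

/-- The global modulus of continuity of a measure `μ` on `ℝ`:
`s(μ, ε) = sup_{λ ∈ ℝ} μ([λ - ε, λ + ε])`. -/
noncomputable def modCont (μ : Measure ℝ) (ε : ℝ) : ℝ :=
  ⨆ l : ℝ, (μ (Set.Icc (l - ε) (l + ε))).toReal

open Set Topology

theorem IsCompact.upperSemicontinuous_biSup {X Y α : Type*} [TopologicalSpace X]
    [TopologicalSpace Y] [CompleteLinearOrder α] [DenselyOrdered α] {f : X × Y → α}
    (hf : UpperSemicontinuous f) {K : Set Y} (hK : IsCompact K) :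
    UpperSemicontinuous fun x => ⨆ y ∈ K, f (x, y) := by
  intro x₀ b hb
  obtain ⟨c, hc, hcb⟩ := exists_between hb
  have hlt : ∀ᶠ x in 𝓝 x₀, ∀ y ∈ K, f (x, y) < c :=
    hK.eventually_forall_of_forall_eventually fun y hy =>
      hf (x₀, y) c ((le_biSup (fun y => f (x₀, y)) hy).trans_lt hc)
  filter_upwards [hlt] with x hx
  exact (iSup₂_le fun y hy => (hx y hy).le).trans_lt hcb

theorem Monotone.continuousWithinAt_Ici_of_upperSemicontinuousAt {α β : Type*} [TopologicalSpace α]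
    [Preorder α] [LinearOrder β] [TopologicalSpace β] [OrderTopology β] {f : α → β} {a : α}
    (hf : Monotone f) (hfa : UpperSemicontinuousAt f a) : ContinuousWithinAt f (Ici a) a := by
  refine tendsto_order.2 ⟨fun b hb => ?_, fun b hb => nhdsWithin_le_nhds (hfa b hb)⟩
  filter_upwards [self_mem_nhdsWithin] with x hx
  exact hb.trans_le (hf hx)

lemma biInter_Icc_sub_add (a b : ℝ) : ⋂ r > (0 : ℝ), Icc (a - r) (b + r) = Icc a b := by
  ext x
  simp only [mem_iInter, mem_Icc, sub_le_iff_le_add, forall_and]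
  rw [← le_iff_forall_pos_le_add, ← le_iff_forall_pos_le_add]

lemma tendsto_measure_Icc_sub_add (μ : Measure ℝ) [IsFiniteMeasureOnCompacts μ] (a b : ℝ) :
    Tendsto (fun r => μ (Icc (a - r) (b + r))) (𝓝[>] 0) (𝓝 (μ (Icc a b))) := by
  rw [← biInter_Icc_sub_add]
  refine tendsto_measure_biInter_gt (fun _ _ => nullMeasurableSet_Icc) ?_
    ⟨1, one_pos, isCompact_Icc.measure_ne_top⟩
  exact fun r s _ hrs => Icc_subset_Icc (by linarith) (by linarith)

lemma upperSemicontinuous_measure_Icc (μ : Measure ℝ) [IsFiniteMeasureOnCompacts μ] :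
    UpperSemicontinuous fun p : ℝ × ℝ => μ (Icc (p.2 - p.1) (p.2 + p.1)) := by
  rintro ⟨r₀, l₀⟩ b hb
  obtain ⟨η, hηb, hη⟩ := (((tendsto_measure_Icc_sub_add μ _ _).eventually (gt_mem_nhds hb)).and
    self_mem_nhdsWithin).exists
  filter_upwards [Metric.ball_mem_nhds ((r₀, l₀) : ℝ × ℝ) (half_pos hη)] with ⟨r, l⟩ hp
  rw [Metric.mem_ball, Prod.dist_eq, max_lt_iff, Real.dist_eq, Real.dist_eq, abs_lt, abs_lt] at hp
  refine lt_of_le_of_lt (measure_mono (Icc_subset_Icc ?_ ?_)) hηb <;> linarith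

/-- The `ℝ≥0∞`-valued `modCont`, on which suprema and limits of measures need no finiteness
side conditions. -/
noncomputable def emodCont (μ : Measure ℝ) (r : ℝ) : ENNReal :=
  ⨆ l : ℝ, μ (Icc (l - r) (l + r))

lemma emodCont_mono (μ : Measure ℝ) : Monotone (emodCont μ) :=
  fun _ _ hrs => iSup_mono fun _ => measure_mono (Icc_subset_Icc (by linarith) (by linarith))

lemma emodCont_ne_top (μ : Measure ℝ) [IsFiniteMeasure μ] (r : ℝ) : emodCont μ r ≠ ⊤ :=
  ne_top_of_le_ne_top (measure_ne_top μ univ) (iSup_le fun _ => measure_mono (subset_univ _))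

lemma modCont_eq_toReal_emodCont (μ : Measure ℝ) [IsFiniteMeasureOnCompacts μ] (r : ℝ) :
    modCont μ r = (emodCont μ r).toReal :=
  (ENNReal.toReal_iSup fun _ => isCompact_Icc.measure_ne_top).symm

lemma emodCont_eq_biSup_of_measure_compl_eq_zero (μ : Measure ℝ) {K : Set ℝ} {a b : ℝ}
    (hμK : μ Kᶜ = 0) (hK : K ⊆ Icc a b) {r ρ : ℝ} (hr : r ≤ ρ) :
    emodCont μ r = ⨆ l ∈ Icc (a - ρ) (b + ρ), μ (Icc (l - r) (l + r)) := by
  refine le_antisymm (iSup_le fun l => ?_) (iSup₂_le fun l _ => le_iSup (fun l => μ _) l)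
  by_cases hl : l ∈ Icc (a - ρ) (b + ρ)
  · exact le_biSup (fun l => μ (Icc (l - r) (l + r))) hl
  have hdisj : Icc (l - r) (l + r) ⊆ Kᶜ := by
    intro x hx hxK
    have := hK hxK
    rw [mem_Icc] at *
    exact hl ⟨by linarith, by linarith⟩
  exact (measure_mono_null hdisj hμK).trans_le zero_le

lemma upperSemicontinuous_emodCont (μ : Measure ℝ) [IsFiniteMeasureOnCompacts μ]
    (hsupp : ∃ K : Set ℝ, IsCompact K ∧ μ Kᶜ = 0) : UpperSemicontinuous (emodCont μ) := by
  obtain ⟨K, hK, hμK⟩ := hsupp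
  obtain ⟨a, ha⟩ := hK.bddBelow
  obtain ⟨b, hb⟩ := hK.bddAbove
  intro r₀
  set C := Icc (a - (r₀ + 1)) (b + (r₀ + 1))
  have hsup := (isCompact_Icc : IsCompact C).upperSemicontinuous_biSup
    (upperSemicontinuous_measure_Icc μ) r₀
  have heq : emodCont μ =ᶠ[𝓝 r₀] fun r => ⨆ l ∈ C, μ (Icc (l - r) (l + r)) := by
    filter_upwards [gt_mem_nhds (lt_add_one r₀)] with r hr
    exact emodCont_eq_biSup_of_measure_compl_eq_zero μ hμK (fun x hx => ⟨ha hx, hb hx⟩) hr.le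
  intro c hc
  rw [heq.eq_of_nhds] at hc
  filter_upwards [heq, hsup c hc] with r hr hrc
  rwa [hr]

theorem modCont_right_continuous_general (μ : Measure ℝ) [IsFiniteMeasure μ]
    (hsupp : ∃ K : Set ℝ, IsCompact K ∧ μ Kᶜ = 0)
    (ε : ℝ) :
    Tendsto (fun δ : ℝ => modCont μ (ε + δ)) (nhdsWithin 0 (Set.Ioi 0))
      (nhds (modCont μ ε)) := by
  have hright : Tendsto (emodCont μ) (𝓝[>] ε) (𝓝 (emodCont μ ε)) :=
    ((emodCont_mono μ).continuousWithinAt_Ici_of_upperSemicontinuousAt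
      (upperSemicontinuous_emodCont μ hsupp ε)).mono Ioi_subset_Ici_self
  have hshift : Tendsto (ε + ·) (𝓝[>] (0 : ℝ)) (𝓝[>] ε) := by
    rw [Tendsto, map_add_left_nhdsGT, add_zero]
  simpa only [modCont_eq_toReal_emodCont, Function.comp_def] using
    (ENNReal.tendsto_toReal (emodCont_ne_top μ ε)).comp (hright.comp hshift)

theorem modCont_right_continuous (μ : Measure ℝ) [IsFiniteMeasure μ]
    (hsupp : ∃ K : Set ℝ, IsCompact K ∧ μ Kᶜ = 0)
    (ε : ℝ) (hε : 0 ≤ ε) :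
    Tendsto (fun δ : ℝ => modCont μ (ε + δ)) (nhdsWithin 0 (Set.Ioi 0))
      (nhds (modCont μ ε)) :=
  modCont_right_continuous_general μ hsupp ε
end

section
/- Let μ be a finite Borel measure on ℝ whose support is contained in the interval [a, b], let φ : ℝ → ℝ be a bounded, nondecreasing, continuously differentiable function, and let δ > 0. Then ∫ (φ(x + 2δ) − φ(x)) dμ(x) ≤ s(μ, δ) · (φ(b + 2δ) − φ(a)). -/
/-!
Write `φ (x + 2δ) - φ x` as the mass `dφ (x, x + 2δ]` of the Stieltjes measure of `φ`. By Tonelli,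
`∫ dφ (x, x + 2δ] dμ(x) = ∫ μ [t - 2δ, t) dφ(t)`. The window `[t - 2δ, t)` has radius `δ`, so the
integrand is at most `s(μ, δ)`, and it vanishes unless `t ∈ (a, b + 2δ]`, a set of `dφ`-mass
`φ (b + 2δ) - φ a`.
-/

open MeasureTheory

open Set ENNReal

theorem lintegral_measure_Ioc_add_eq (μ ν : Measure ℝ) [SFinite μ] [SFinite ν] (w : ℝ) :
    ∫⁻ x, ν (Ioc x (x + w)) ∂μ = ∫⁻ t, μ (Ico (t - w) t) ∂ν := by
  have hS : MeasurableSet {p : ℝ × ℝ | p.1 < p.2 ∧ p.2 ≤ p.1 + w} :=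
    (measurableSet_lt measurable_fst measurable_snd).inter
      (measurableSet_le measurable_snd (measurable_fst.add_const w))
  calc ∫⁻ x, ν (Ioc x (x + w)) ∂μ = μ.prod ν {p : ℝ × ℝ | p.1 < p.2 ∧ p.2 ≤ p.1 + w} :=
        (Measure.prod_apply hS).symm
    _ = ∫⁻ t, μ ((fun x => (x, t)) ⁻¹' {p : ℝ × ℝ | p.1 < p.2 ∧ p.2 ≤ p.1 + w}) ∂ν :=
        Measure.prod_apply_symm hS
    _ = ∫⁻ t, μ (Ico (t - w) t) ∂ν := by
        refine lintegral_congr fun t => congrArg μ (ext fun x => ?_)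
        simp only [mem_preimage, mem_ofPred_eq, mem_Ico]
        constructor <;> rintro ⟨h₁, h₂⟩ <;> constructor <;> linarith

theorem lintegral_measure_Ico_sub_le {μ : Measure ℝ} (ν : Measure ℝ) {a b : ℝ}
    (hsupp : μ (Icc a b)ᶜ = 0) {w : ℝ} {c : ℝ≥0∞} (hc : ∀ t, μ (Ico (t - w) t) ≤ c) :
    ∫⁻ t, μ (Ico (t - w) t) ∂ν ≤ c * ν (Ioc a (b + w)) := by
  rw [← lintegral_indicator_const measurableSet_Ioc]
  refine lintegral_mono fun t => ?_
  by_cases ht : t ∈ Ioc a (b + w)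
  · simpa [indicator_of_mem ht] using hc t
  · rw [indicator_of_notMem ht]
    refine (measure_mono_null (fun x hx => ?_) hsupp).le
    simp only [mem_Ioc, not_and_or, not_lt, not_le] at ht
    simp only [mem_Ico] at hx
    simp only [mem_compl_iff, mem_Icc, not_and_or, not_le]
    rcases ht with ht | ht
    · left; linarith
    · right; linarith

theorem modCont_nonneg (μ : Measure ℝ) (ε : ℝ) : 0 ≤ modCont μ ε :=
  Real.iSup_nonneg fun _ => toReal_nonneg

theorem measure_Icc_le_modCont (μ : Measure ℝ) [IsFiniteMeasure μ] (l ε : ℝ) :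
    μ (Icc (l - ε) (l + ε)) ≤ ENNReal.ofReal (modCont μ ε) := by
  have hbdd : BddAbove (range fun l => (μ (Icc (l - ε) (l + ε))).toReal) :=
    ⟨μ.real univ, forall_mem_range.2 fun _ => measureReal_mono (subset_univ _)⟩
  rw [← ofReal_toReal (measure_ne_top μ _)]
  exact ofReal_le_ofReal (le_ciSup hbdd l)

theorem lintegral_measure_Ioc_le_modCont_mul (μ ν : Measure ℝ) [IsFiniteMeasure μ] [SFinite ν]
    {a b : ℝ} (hsupp : μ (Icc a b)ᶜ = 0) (δ : ℝ) :
    ∫⁻ x, ν (Ioc x (x + 2 * δ)) ∂μ ≤ ENNReal.ofReal (modCont μ δ) * ν (Ioc a (b + 2 * δ)) := by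
  rw [lintegral_measure_Ioc_add_eq]
  refine lintegral_measure_Ico_sub_le ν hsupp fun t => ?_
  calc μ (Ico (t - 2 * δ) t) ≤ μ (Icc (t - δ - δ) (t - δ + δ)) :=
        measure_mono fun x hx => ⟨by linarith [hx.1], by linarith [hx.2]⟩
    _ ≤ ENNReal.ofReal (modCont μ δ) := measure_Icc_le_modCont μ _ δ

theorem averaging_inequality_general (μ : Measure ℝ) [IsFiniteMeasure μ]
    (a b : ℝ) (hsupp : μ (Set.Icc a b)ᶜ = 0)
    (φ : ℝ → ℝ) (hφ_mono : Monotone φ)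
    (hφ_smooth : ContDiff ℝ 1 φ)
    (δ : ℝ) (hδ : 0 < δ) :
    ∫ x, (φ (x + 2 * δ) - φ x) ∂μ ≤ modCont μ δ * (φ (b + 2 * δ) - φ a) := by
  rcases eq_zero_or_neZero μ with rfl | hμ
  · simp [modCont]
  have hab : a ≤ b := by
    by_contra! h
    rw [Icc_eq_empty h.not_ge, compl_empty, Measure.measure_univ_eq_zero] at hsupp
    exact NeZero.ne μ hsupp
  have hφ_cont : Continuous φ := hφ_smooth.continuous
  let f : StieltjesFunction ℝ := ⟨φ, hφ_mono, fun x => hφ_cont.continuousWithinAt⟩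
  have hlintegral := lintegral_measure_Ioc_le_modCont_mul μ f.measure hsupp δ
  simp only [f.measure_Ioc] at hlintegral
  rw [integral_eq_lintegral_of_nonneg_ae
    (ae_of_all _ fun x => sub_nonneg.2 (hφ_mono (by linarith))) (by fun_prop)]
  calc _ ≤ (ENNReal.ofReal (modCont μ δ) * ENNReal.ofReal (φ (b + 2 * δ) - φ a)).toReal :=
        toReal_mono (by finiteness) hlintegral
    _ = modCont μ δ * (φ (b + 2 * δ) - φ a) := by
        rw [toReal_mul, toReal_ofReal (modCont_nonneg μ δ),
          toReal_ofReal (sub_nonneg.2 (hφ_mono (by linarith)))]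

theorem averaging_inequality (μ : Measure ℝ) [IsFiniteMeasure μ]
    (a b : ℝ) (hsupp : μ (Set.Icc a b)ᶜ = 0)
    (φ : ℝ → ℝ) (hφ_bdd : ∃ M : ℝ, ∀ x, |φ x| ≤ M) (hφ_mono : Monotone φ)
    (hφ_smooth : ContDiff ℝ 1 φ)
    (δ : ℝ) (hδ : 0 < δ) :
    ∫ x, (φ (x + 2 * δ) - φ x) ∂μ ≤ modCont μ δ * (φ (b + 2 * δ) - φ a) :=
  averaging_inequality_general μ a b hsupp φ hφ_mono hφ_smooth δ hδ
end
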